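/- arXiv:2001.09601 — 2 statements merged into one kernel-verified Lean document; each statement's English description precedes it below -/
import Mathlib

section
/- In Halkin's example, the function S(x) = 1 − x is nonnegative on [0,1] and satisfies the differential dissipation inequality ∇S(x)·(1−x)u ≤ −(1−x)u for all x ∈ [0,1] and u ∈ [0,1] (with equality), so S is a storage function; moreover it equals the available storage: S^a_ℓ(x0) = sup_T (x*(T,x0) − x0) = 1 − x0 = −V_∞(x0) for x0 ∈ [0,1], where x*(t,x0) = e^{−t}x0 + 1 − e^{−t}. Hence Halkin's example is a dissipative optimal control problem. (Example 3.) -/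
open MeasureTheory Set Filter

/-- Halkin's example is dissipative: `S(x) = 1 − x` is nonnegative on `[0,1]` and
satisfies the differential dissipation inequality
`∇S(x)·(1−x)u ≤ −(1−x)u` (with equality) for all `x,u ∈ [0,1]`; moreover it equals
the available storage: `S^a_ℓ(x0) = sup_{T≥0} (x*(T,x0) − x0) = 1 − x0 = −V_∞(x0)`
for `x0 ∈ [0,1]`, where `x*(t,x0) = e^{−t}x0 + 1 − e^{−t}`. -/
theorem halkin_storage_function :
    (∀ x ∈ Set.Icc (0:ℝ) 1, 0 ≤ (fun y : ℝ => 1 - y) x) ∧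
    (∀ x ∈ Set.Icc (0:ℝ) 1, ∀ u ∈ Set.Icc (0:ℝ) 1,
      deriv (fun y : ℝ => 1 - y) x * ((1 - x) * u) = -((1 - x) * u) ∧
      deriv (fun y : ℝ => 1 - y) x * ((1 - x) * u) ≤ -((1 - x) * u)) ∧
    (∀ x0 ∈ Set.Icc (0:ℝ) 1,
      sSup ((fun T : ℝ => (Real.exp (-T) * x0 + 1 - Real.exp (-T)) - x0) ''
        Set.Ici (0:ℝ)) = 1 - x0 ∧
      (1 - x0 : ℝ) =
        -(∫ t in Set.Ioi (0:ℝ), -(1 - (Real.exp (-t) * x0 + 1 - Real.exp (-t))))) := by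
  have hderiv : deriv (fun y : ℝ => 1 - y) = fun _ => (-1 : ℝ) := by
    funext x
    simpa using deriv_const_sub (c := (1:ℝ)) (f := fun y : ℝ => y) (x := x)
  refine ⟨fun x hx => by simpa using hx.2, fun x hx u hu => ?_, fun x0 hx0 => ?_⟩
  · rw [hderiv]; constructor <;> ring_nf <;> rfl
  · constructor
    · -- sSup
      have hlub : IsLUB ((fun T : ℝ => (Real.exp (-T) * x0 + 1 - Real.exp (-T)) - x0) ''
          Set.Ici (0:ℝ)) (1 - x0) := by
        constructor
        · rintro y ⟨T, hT, rfl⟩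
          have h1 : Real.exp (-T) ≥ 0 := (Real.exp_pos _).le
          simp only
          nlinarith [hx0.2]
        · intro b hb
          have htend : Tendsto (fun T : ℝ => (Real.exp (-T) * x0 + 1 - Real.exp (-T)) - x0)
              atTop (nhds (1 - x0)) := by
            have h : Tendsto (fun T : ℝ => Real.exp (-T)) atTop (nhds 0) := by
              simpa using Real.tendsto_exp_neg_atTop_nhds_zero
            have := ((h.mul_const x0).add_const 1).sub h |>.sub_const x0
            simpa using this
          exact le_of_tendsto htend (eventually_atTop.2 ⟨0, fun T hT =>
            hb ⟨T, hT, rfl⟩⟩)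
      exact hlub.csSup_eq ⟨_, Set.mem_image_of_mem _ Set.self_mem_Ici⟩
    · have h1 : (fun t : ℝ => -(1 - (Real.exp (-t) * x0 + 1 - Real.exp (-t)))) =
          fun t : ℝ => (x0 - 1) * Real.exp (-t) := by funext t; ring
      rw [h1, integral_const_mul, integral_exp_neg_Ioi_zero]
      ring
end

section
/- In Halkin's example with optimal control u* ≡ 1 and normalized multiplier λ0 = 1, the adjoint equation reads λ̇(t) = λ(t) − 1, whose general solution is λ(t) = (λ(0) − 1)e^{t} + 1; the unique bounded solution corresponds to λ(0) = 1 and satisfies λ(t) ≡ 1 for all t ≥ 0. In particular the infinite-horizon adjoint does not converge to 0, so the finite-horizon transversality condition λ(T) = 0 fails to carry over asymptotically to the infinite horizon. (Halkin's counterexample to infinite-horizon transversality, Example 1.) -/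
open MeasureTheory Set Filter

lemma halkin_sol (lam : ℝ → ℝ) (h : ∀ t : ℝ, HasDerivAt lam (lam t - 1) t) :
    ∀ t : ℝ, lam t = (lam 0 - 1) * Real.exp t + 1 := by
  set g : ℝ → ℝ := fun t => (lam t - 1) * Real.exp (-t) with hg
  have hder : ∀ t : ℝ, HasDerivAt g 0 t := by
    intro t
    have h1 : HasDerivAt (fun t => lam t - 1) (lam t - 1) t := (h t).sub_const 1
    have h2 : HasDerivAt (fun t : ℝ => Real.exp (-t)) (-Real.exp (-t)) t := by
      simpa [Function.comp_def] using (Real.hasDerivAt_exp (-t)).comp t (hasDerivAt_neg t)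
    have : HasDerivAt (fun t => (lam t - 1) * Real.exp (-t)) ((lam t - 1) * Real.exp (-t) + (lam t - 1) * -Real.exp (-t)) t := h1.mul h2
    convert this using 1
    ring
  have hconst : ∀ t : ℝ, g t = g 0 := by
    intro t
    have hdiff : Differentiable ℝ g := fun x => (hder x).differentiableAt
    have := is_const_of_deriv_eq_zero hdiff (fun x => (hder x).deriv) t 0
    exact this
  intro t
  have := hconst t
  simp only [hg, Real.exp_zero, neg_zero, mul_one] at this
  have hepos := Real.exp_pos (-t)
  have hee : Real.exp (-t) * Real.exp t = 1 := by
    rw [← Real.exp_add]; simp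
  have h2 : (lam t - 1) * Real.exp (-t) * Real.exp t = (lam 0 - 1) * Real.exp t := by
    rw [this]
  rw [mul_assoc, hee, mul_one] at h2
  linarith

/-- Halkin's counterexample to infinite-horizon transversality: with `u* ≡ 1` and
`λ0 = 1` the adjoint equation is `λ̇ = λ − 1` with general solution
`λ(t) = (λ(0) − 1)eᵗ + 1`; a solution is bounded on `[0,∞)` iff `λ(0) = 1`, in which
case `λ ≡ 1`; in particular the bounded infinite-horizon adjoint is constantly `1`
and does not converge to `0`. -/
theorem halkin_adjoint :
    (∀ (lam : ℝ → ℝ), (∀ t : ℝ, HasDerivAt lam (lam t - 1) t) →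
      ∀ t : ℝ, lam t = (lam 0 - 1) * Real.exp t + 1) ∧
    (∀ (lam : ℝ → ℝ), (∀ t : ℝ, HasDerivAt lam (lam t - 1) t) →
      ((∃ M : ℝ, ∀ t : ℝ, 0 ≤ t → |lam t| ≤ M) ↔ (lam 0 = 1 ∧ ∀ t : ℝ, lam t = 1))) ∧
    (∀ (lam : ℝ → ℝ), (∀ t : ℝ, HasDerivAt lam (lam t - 1) t) →
      (∃ M : ℝ, ∀ t : ℝ, 0 ≤ t → |lam t| ≤ M) →
      ¬ Filter.Tendsto lam Filter.atTop (nhds 0)) := by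
  have key : ∀ (lam : ℝ → ℝ), (∀ t : ℝ, HasDerivAt lam (lam t - 1) t) →
      (∃ M : ℝ, ∀ t : ℝ, 0 ≤ t → |lam t| ≤ M) → (lam 0 = 1 ∧ ∀ t : ℝ, lam t = 1) := by
    intro lam h ⟨M, hM⟩
    have hsol := halkin_sol lam h
    set c := lam 0 - 1 with hc
    have hc0 : c = 0 := by
      by_contra hne
      have hcpos : 0 < |c| := abs_pos.mpr hne
      have hM0 : 0 ≤ M := le_trans (abs_nonneg _) (hM 0 le_rfl)
      set t := |Real.log ((M + 2) / |c|)| with ht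
      have ht0 : 0 ≤ t := abs_nonneg _
      have hexp : (M + 2) / |c| ≤ Real.exp t := by
        calc (M + 2) / |c| = Real.exp (Real.log ((M + 2) / |c|)) := by
              rw [Real.exp_log (by positivity)]
          _ ≤ Real.exp t := Real.exp_le_exp.mpr (le_abs_self _)
      have hge : M + 2 ≤ |c| * Real.exp t := by
        rw [div_le_iff₀ hcpos] at hexp
        linarith [hexp]
      have hbound := hM t ht0
      rw [hsol t] at hbound
      have habs : |c * Real.exp t| ≤ |c * Real.exp t + 1| + 1 := by
        have := abs_add_le (c * Real.exp t + 1) (-1)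
        simpa using this
      rw [abs_mul, abs_of_pos (Real.exp_pos t)] at habs
      linarith
    have hlam0 : lam 0 = 1 := by linarith [hc]
    refine ⟨hlam0, fun t => ?_⟩
    rw [hsol t, hc0]; ring
  refine ⟨halkin_sol, fun lam h => ⟨key lam h, ?_⟩, fun lam h hb htend => ?_⟩
  · rintro ⟨-, hone⟩
    exact ⟨1, fun t _ => by rw [hone t]; norm_num⟩
  · obtain ⟨-, hone⟩ := key lam h hb
    have h1 : Filter.Tendsto lam Filter.atTop (nhds 1) := by
      have : lam = fun _ => (1:ℝ) := funext hone
      rw [this]; exact tendsto_const_nhds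
    have := tendsto_nhds_unique htend h1
    norm_num at this
end
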